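/- arXiv:2509.08922 — 2 statements merged into one kernel-verified Lean document; each statement's English description precedes it below -/
import Mathlib

section
/- Let f = h + conj(g) with h, g holomorphic on the unit disk, h' nonvanishing, and ω = g'/h' satisfying |ω| < 1. Then the Jacobian J = |h'|² - |g'|² satisfies the identity (-log J)_{z z̄} = |ω'|² / (1 - |ω|²)² at every point of the disk. -/
open Complex Metric

/-- Wirtinger derivative ∂/∂z = (∂/∂x - i ∂/∂y)/2. -/
noncomputable def wdz (f : ℂ → ℂ) (z : ℂ) : ℂ :=
  (fderiv ℝ f z 1 - Complex.I * fderiv ℝ f z Complex.I) / 2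

/-- Wirtinger derivative ∂/∂z̄ = (∂/∂x + i ∂/∂y)/2. -/
noncomputable def wdzbar (f : ℂ → ℂ) (z : ℂ) : ℂ :=
  (fderiv ℝ f z 1 + Complex.I * fderiv ℝ f z Complex.I) / 2

/-!
Differentiating `log J` with `J = h' h̄' - g' ḡ'` gives `∂ log J = (h'' h̄' - g'' ḡ') / J`, whose
`∂̄`-derivative is `-|h' g'' - g' h''|² / J²` by the quotient rule (the `|h'|² |h''|²` and
`|g'|² |g''|²` terms cancel). Since `ω' = (h' g'' - g' h'') / h'²` and `J = |h'|² (1 - |ω|²)`,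
this is `-|ω'|² / (1 - |ω|²)²`.
-/

open ComplexConjugate Filter Topology

def HasWirtingerDerivAt (f : ℂ → ℂ) (a b z : ℂ) : Prop :=
  HasFDerivAt f (a • ContinuousLinearMap.id ℝ ℂ + b • (conjCLE : ℂ →L[ℝ] ℂ)) z

theorem Filter.EventuallyEq.wdzbar_eq {f g : ℂ → ℂ} {z : ℂ} (h : f =ᶠ[𝓝 z] g) :
    wdzbar f z = wdzbar g z := by
  rw [wdzbar, wdzbar, h.fderiv_eq]

namespace HasWirtingerDerivAt

variable {f g : ℂ → ℂ} {a b c d z : ℂ}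

theorem of_hasFDerivAt {L : ℂ →L[ℝ] ℂ} (hf : HasFDerivAt f L z)
    (hL : ∀ v, L v = a * v + b * conj v) : HasWirtingerDerivAt f a b z := by
  unfold HasWirtingerDerivAt
  convert hf using 1
  ext v
  simp [hL]

theorem fderiv_apply (hf : HasWirtingerDerivAt f a b z) (v : ℂ) :
    fderiv ℝ f z v = a * v + b * conj v := by
  simp [HasFDerivAt.fderiv hf]

theorem wdz_eq (hf : HasWirtingerDerivAt f a b z) : wdz f z = a := by
  simp only [wdz, hf.fderiv_apply, conj_I, map_one]
  linear_combination (b - a) / 2 * I_mul_I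

theorem wdzbar_eq (hf : HasWirtingerDerivAt f a b z) : wdzbar f z = b := by
  simp only [wdzbar, hf.fderiv_apply, conj_I, map_one]
  linear_combination (a - b) / 2 * I_mul_I

theorem neg (hf : HasWirtingerDerivAt f a b z) :
    HasWirtingerDerivAt (fun w => -f w) (-a) (-b) z :=
  of_hasFDerivAt (HasFDerivAt.neg hf) fun v => by simp; ring

theorem sub (hf : HasWirtingerDerivAt f a b z) (hg : HasWirtingerDerivAt g c d z) :
    HasWirtingerDerivAt (fun w => f w - g w) (a - c) (b - d) z :=
  of_hasFDerivAt (HasFDerivAt.sub hf hg) fun v => by simp; ring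

theorem mul (hf : HasWirtingerDerivAt f a b z) (hg : HasWirtingerDerivAt g c d z) :
    HasWirtingerDerivAt (fun w => f w * g w) (a * g z + f z * c) (b * g z + f z * d) z :=
  of_hasFDerivAt (HasFDerivAt.mul hf hg) fun v => by simp; ring

theorem star (hf : HasWirtingerDerivAt f a b z) :
    HasWirtingerDerivAt (fun w => conj (f w)) (conj b) (conj a) z :=
  of_hasFDerivAt ((conjCLE : ℂ →L[ℝ] ℂ).hasFDerivAt.comp z hf) fun v => by simp; ring

theorem _root_.HasDerivAt.hasWirtingerDerivAt (hf : HasDerivAt f a z) :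
    HasWirtingerDerivAt f a 0 z :=
  of_hasFDerivAt (hf.hasFDerivAt.restrictScalars ℝ) fun v => by simp [mul_comm]

theorem _root_.HasDerivAt.comp_hasWirtingerDerivAt {φ : ℂ → ℂ} (hφ : HasDerivAt φ c (f z))
    (hf : HasWirtingerDerivAt f a b z) :
    HasWirtingerDerivAt (φ ∘ f) (c * a) (c * b) z :=
  of_hasFDerivAt (hφ.comp_hasFDerivAt z hf) fun v => by simp; ring

theorem div (hf : HasWirtingerDerivAt f a b z) (hg : HasWirtingerDerivAt g c d z)
    (hz : g z ≠ 0) :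
    HasWirtingerDerivAt (fun w => f w / g w)
      ((a * g z - f z * c) / g z ^ 2) ((b * g z - f z * d) / g z ^ 2) z := by
  convert hf.mul ((hasDerivAt_inv hz).comp_hasWirtingerDerivAt hg) using 1 <;>
    simp only [Function.comp_apply, div_eq_mul_inv] <;> field_simp <;> ring

theorem ofReal_log {u : ℂ → ℝ} (hu : HasWirtingerDerivAt (fun w => (u w : ℂ)) a (conj a) z)
    (hz : u z ≠ 0) :
    HasWirtingerDerivAt (fun w => (Real.log (u w) : ℂ)) (a / u z) (conj a / u z) z := by
  have hu_re : HasFDerivAt u (reCLM.comp _) z := reCLM.hasFDerivAt.comp z hu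
  refine of_hasFDerivAt (ofRealCLM.hasFDerivAt.comp z
    ((Real.hasDerivAt_log hz).comp_hasFDerivAt z hu_re)) fun v => ?_
  apply Complex.ext <;> simp <;> field_simp <;> ring

end HasWirtingerDerivAt

section JacobianLog

variable {H G : ℂ → ℂ} {a b z : ℂ}

theorem HasDerivAt.hasWirtingerDerivAt_mul_conj (hH : HasDerivAt H a z)
    (hG : HasDerivAt G b z) :
    HasWirtingerDerivAt (fun w => H w * conj (G w)) (a * conj (G z)) (H z * conj b) z := by
  convert hH.hasWirtingerDerivAt.mul hG.hasWirtingerDerivAt.star using 1 <;> simp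

theorem hasWirtingerDerivAt_normSq_sub_normSq (hH : HasDerivAt H a z) (hG : HasDerivAt G b z) :
    HasWirtingerDerivAt (fun w => ((normSq (H w) - normSq (G w) : ℝ) : ℂ))
      (a * conj (H z) - b * conj (G z)) (H z * conj a - G z * conj b) z := by
  convert (hH.hasWirtingerDerivAt_mul_conj hH).sub (hG.hasWirtingerDerivAt_mul_conj hG) using 2
  push_cast [mul_conj]
  rfl

theorem wdz_neg_log_normSq_sub_normSq (hH : HasDerivAt H a z) (hG : HasDerivAt G b z)
    (hz : normSq (H z) ≠ normSq (G z)) :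
    wdz (fun w => (-(Real.log (normSq (H w) - normSq (G w))) : ℂ)) z
      = -((a * conj (H z) - b * conj (G z)) / (normSq (H z) - normSq (G z) : ℝ)) := by
  have hJ := hasWirtingerDerivAt_normSq_sub_normSq hH hG
  rw [show H z * conj a - G z * conj b = conj (a * conj (H z) - b * conj (G z)) by simp; ring]
    at hJ
  exact (hJ.ofReal_log (sub_ne_zero.2 hz)).neg.wdz_eq

theorem wdzbar_wdz_neg_log_normSq_sub_normSq {U : Set ℂ} (hU : IsOpen U)
    (hH : DifferentiableOn ℂ H U) (hG : DifferentiableOn ℂ G U)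
    (hU0 : ∀ w ∈ U, normSq (H w) ≠ normSq (G w)) (hz : z ∈ U) :
    wdzbar (fun w => wdz (fun u => (-(Real.log (normSq (H u) - normSq (G u))) : ℂ)) w) z
      = (normSq (H z * deriv G z - G z * deriv H z) / (normSq (H z) - normSq (G z)) ^ 2 : ℝ) := by
  have hH' := (hH.analyticOnNhd hU).deriv.differentiableOn
  have hG' := (hG.analyticOnNhd hU).deriv.differentiableOn
  have hUz : U ∈ 𝓝 z := hU.mem_nhds hz
  have hwdz : (fun w => wdz (fun u => (-(Real.log (normSq (H u) - normSq (G u))) : ℂ)) w)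
      =ᶠ[𝓝 z] fun w => -((deriv H w * conj (H w) - deriv G w * conj (G w))
        / ((normSq (H w) - normSq (G w) : ℝ) : ℂ)) := by
    filter_upwards [hUz] with w hw
    exact wdz_neg_log_normSq_sub_normSq (hH.hasDerivAt (hU.mem_nhds hw))
      (hG.hasDerivAt (hU.mem_nhds hw)) (hU0 w hw)
  have hN := ((hH'.hasDerivAt hUz).hasWirtingerDerivAt_mul_conj (hH.hasDerivAt hUz)).sub
    ((hG'.hasDerivAt hUz).hasWirtingerDerivAt_mul_conj (hG.hasDerivAt hUz))
  have hJ := hasWirtingerDerivAt_normSq_sub_normSq (hH.hasDerivAt hUz) (hG.hasDerivAt hUz)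
  have hJz : ((normSq (H z) - normSq (G z) : ℝ) : ℂ) ≠ 0 :=
    ofReal_ne_zero.2 (sub_ne_zero.2 (hU0 z hz))
  rw [hwdz.wdzbar_eq, ((hN.div hJ hJz).neg).wdzbar_eq]
  push_cast
  simp only [← mul_conj, map_sub, map_mul]
  field_simp
  ring

end JacobianLog

theorem stmt_2 (h g : ℂ → ℂ)
    (hh : DifferentiableOn ℂ h (ball (0:ℂ) 1))
    (hg : DifferentiableOn ℂ g (ball (0:ℂ) 1))
    (hh' : ∀ z ∈ ball (0:ℂ) 1, deriv h z ≠ 0)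
    (ω : ℂ → ℂ) (hω : ∀ z, ω z = deriv g z / deriv h z)
    (hω1 : ∀ z ∈ ball (0:ℂ) 1, ‖ω z‖ < 1)
    (J : ℂ → ℝ)
    (hJ : ∀ z, J z = (‖deriv h z‖)^2 - (‖deriv g z‖)^2) :
    ∀ z ∈ ball (0:ℂ) 1,
      wdzbar (fun w => wdz (fun u => (-(Real.log (J u)) : ℂ)) w) z
        = ((‖deriv ω z‖)^2 / (1 - (‖ω z‖)^2)^2 : ℝ) := by
  intro z hz
  obtain rfl : J = fun u => normSq (deriv h u) - normSq (deriv g u) :=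
    funext fun u => by simp only [hJ, Complex.sq_norm]
  have hh'' := (hh.analyticOnNhd isOpen_ball).deriv.differentiableOn
  have hg'' := (hg.analyticOnNhd isOpen_ball).deriv.differentiableOn
  have hJ0 : ∀ w ∈ ball (0:ℂ) 1, normSq (deriv h w) ≠ normSq (deriv g w) := fun w hw => by
    have hpos : 0 < normSq (deriv h w) := normSq_pos.2 (hh' w hw)
    have hω2 : normSq (ω w) < 1 := by simpa [← Complex.sq_norm] using hω1 w hw
    rw [← div_mul_cancel₀ (deriv g w) (hh' w hw), ← hω, normSq_mul]
    nlinarith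
  have hωz : deriv ω z
      = (deriv (deriv g) z * deriv h z - deriv g z * deriv (deriv h) z) / deriv h z ^ 2 := by
    rw [show ω = fun w => deriv g w / deriv h w from funext hω]
    exact ((hg''.hasDerivAt (isOpen_ball.mem_nhds hz)).div
      (hh''.hasDerivAt (isOpen_ball.mem_nhds hz)) (hh' z hz)).deriv
  rw [wdzbar_wdz_neg_log_normSq_sub_normSq isOpen_ball hh'' hg'' hJ0 hz, hωz, hω]
  have h0 := normSq_pos.2 (hh' z hz)
  have hJz := sub_ne_zero.2 (hJ0 z hz)
  simp only [Complex.sq_norm, normSq_div, map_pow]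
  field_simp
end

section
/- Let f and F be sense-preserving harmonic functions on the unit disk with the same Jacobian J = |h'|² - |g'|² = |H'|² - |G'|², and suppose their dilatations satisfy ω_F = T∘ω with T a disk automorphism T(w) = e^{iγ}(w+z₀)/(1+conj(z₀)w). Then |H'| = |h' + conj(z₀)g'|/√(1-|z₀|²) and |G'| = |g' + z₀h'|/√(1-|z₀|²) pointwise. -/
/-!
Clearing denominators in the Möbius relation `ω_F = T ∘ ω` shows that `(|H'|, |G'|)` is
proportional to `(|h' + z̄₀ g'|, |g' + z₀ h'|)`. Since
`|a + z̄₀ b|² - |b + z₀ a|² = (1 - |z₀|²)(|a|² - |b|²)` and the Jacobians agree, the factor of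
proportionality is `1 / √(1 - |z₀|²)`.
-/

open Complex Metric ComplexConjugate

theorem div_add_div_one_add_mul_div {K : Type*} [Field K] {a : K} (ha : a ≠ 0) (b c d : K) :
    (b / a + c) / (1 + d * (b / a)) = (b + c * a) / (a + d * b) := by
  rw [div_add' _ _ _ ha, mul_div_assoc', one_add_div ha, div_div_div_cancel_right₀ ha]

theorem Complex.norm_add_conj_mul_sq_sub_norm_add_mul_sq (a b z : ℂ) :
    ‖a + conj z * b‖ ^ 2 - ‖b + z * a‖ ^ 2 = (1 - ‖z‖ ^ 2) * (‖a‖ ^ 2 - ‖b‖ ^ 2) := by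
  simp only [Complex.sq_norm, normSq_apply, add_re, add_im, mul_re, mul_im, conj_re, conj_im]
  ring

theorem Real.eq_div_sqrt_of_div_eq_div {X Y P Q s : ℝ} (hY : 0 ≤ Y) (hYX : Y < X) (hP : 0 ≤ P)
    (hs : 0 < s) (hPQ : P ^ 2 - Q ^ 2 = s * (X ^ 2 - Y ^ 2)) (hratio : Y / X = Q / P) :
    X = P / √s ∧ Y = Q / √s := by
  have hX : 0 < X := hY.trans_lt hYX
  have hP_pos : 0 < P := by
    refine hP.lt_of_ne fun hP0 => ?_
    nlinarith [sq_nonneg Q, mul_pos hs (sub_pos.2 (pow_lt_pow_left₀ hYX hY two_ne_zero))]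
  have hQ : Q = P * Y / X := by
    field_simp at hratio ⊢
    linarith
  have hsqrt : √s = P / X := by
    have hD : X ^ 2 - Y ^ 2 ≠ 0 := by nlinarith
    have hs' : s = (P / X) ^ 2 := by
      apply mul_right_cancel₀ hD
      rw [← hPQ, hQ]
      field_simp
    rw [hs', Real.sqrt_sq (by positivity)]
  rw [hsqrt, hQ]
  constructor <;> field_simp

theorem norm_eq_of_div_eq_mobius {a b A B z₀ : ℂ} {γ : ℝ} (ha : a ≠ 0) (hz₀ : ‖z₀‖ < 1)
    (hω : ‖b / a‖ < 1) (hJ : ‖A‖ ^ 2 - ‖B‖ ^ 2 = ‖a‖ ^ 2 - ‖b‖ ^ 2)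
    (hdil : B / A = exp (γ * I) * (b / a + z₀) / (1 + conj z₀ * (b / a))) :
    ‖A‖ = ‖a + conj z₀ * b‖ / √(1 - ‖z₀‖ ^ 2) ∧
      ‖B‖ = ‖b + z₀ * a‖ / √(1 - ‖z₀‖ ^ 2) := by
  have hba : ‖b‖ < ‖a‖ := by rwa [norm_div, div_lt_one (norm_pos_iff.mpr ha)] at hω
  have hBA : ‖B‖ < ‖A‖ := by nlinarith [norm_nonneg A, norm_nonneg B, norm_nonneg b]
  have hratio : ‖B‖ / ‖A‖ = ‖b + z₀ * a‖ / ‖a + conj z₀ * b‖ := by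
    rw [← norm_div, hdil, mul_div_assoc, div_add_div_one_add_mul_div ha, norm_mul,
      norm_exp_ofReal_mul_I, one_mul, norm_div]
  refine Real.eq_div_sqrt_of_div_eq_div (norm_nonneg B) hBA (norm_nonneg _) ?_ ?_ hratio
  · nlinarith [norm_nonneg z₀]
  · rw [hJ, norm_add_conj_mul_sq_sub_norm_add_mul_sq]

theorem stmt_15_general (h g H G : ℂ → ℂ)
    (hh' : ∀ z ∈ ball (0:ℂ) 1, deriv h z ≠ 0)
    (hω : ∀ z ∈ ball (0:ℂ) 1, ‖deriv g z / deriv h z‖ < 1)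
    (z₀ : ℂ) (hz₀ : ‖z₀‖ < 1) (γ : ℝ)
    (hJ : ∀ z ∈ ball (0:ℂ) 1,
      (‖deriv H z‖)^2 - (‖deriv G z‖)^2
        = (‖deriv h z‖)^2 - (‖deriv g z‖)^2)
    (hdil : ∀ z ∈ ball (0:ℂ) 1,
      deriv G z / deriv H z
        = Complex.exp (γ * Complex.I) * (deriv g z / deriv h z + z₀)
            / (1 + (starRingEnd ℂ) z₀ * (deriv g z / deriv h z))) :
    ∀ z ∈ ball (0:ℂ) 1,
      ‖deriv H z‖
          = ‖deriv h z + (starRingEnd ℂ) z₀ * deriv g z‖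
              / Real.sqrt (1 - (‖z₀‖)^2)
      ∧ ‖deriv G z‖
          = ‖deriv g z + z₀ * deriv h z‖
              / Real.sqrt (1 - (‖z₀‖)^2) := fun z hz =>
  norm_eq_of_div_eq_mobius (hh' z hz) hz₀ (hω z hz) (hJ z hz) (hdil z hz)

theorem stmt_15 (h g H G : ℂ → ℂ)
    (hh : DifferentiableOn ℂ h (ball (0:ℂ) 1))
    (hg : DifferentiableOn ℂ g (ball (0:ℂ) 1))
    (hH : DifferentiableOn ℂ H (ball (0:ℂ) 1))
    (hG : DifferentiableOn ℂ G (ball (0:ℂ) 1))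
    (hh' : ∀ z ∈ ball (0:ℂ) 1, deriv h z ≠ 0)
    (hH' : ∀ z ∈ ball (0:ℂ) 1, deriv H z ≠ 0)
    (hω : ∀ z ∈ ball (0:ℂ) 1, ‖deriv g z / deriv h z‖ < 1)
    (hωF : ∀ z ∈ ball (0:ℂ) 1, ‖deriv G z / deriv H z‖ < 1)
    (z₀ : ℂ) (hz₀ : ‖z₀‖ < 1) (γ : ℝ)
    (hJ : ∀ z ∈ ball (0:ℂ) 1,
      (‖deriv H z‖)^2 - (‖deriv G z‖)^2
        = (‖deriv h z‖)^2 - (‖deriv g z‖)^2)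
    (hdil : ∀ z ∈ ball (0:ℂ) 1,
      deriv G z / deriv H z
        = Complex.exp (γ * Complex.I) * (deriv g z / deriv h z + z₀)
            / (1 + (starRingEnd ℂ) z₀ * (deriv g z / deriv h z))) :
    ∀ z ∈ ball (0:ℂ) 1,
      ‖deriv H z‖
          = ‖deriv h z + (starRingEnd ℂ) z₀ * deriv g z‖
              / Real.sqrt (1 - (‖z₀‖)^2)
      ∧ ‖deriv G z‖
          = ‖deriv g z + z₀ * deriv h z‖
              / Real.sqrt (1 - (‖z₀‖)^2) :=
  stmt_15_general h g H G hh' hω z₀ hz₀ γ hJ hdil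
end
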